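/- Let r : ℤ → LaurentPolynomial ℤ be defined by r n = (T - 2 + T⁻¹) * (T^n + T^(-n)) + (T^2 - 4*T + 5 - 4*T⁻¹ + T^(-2)). Then for all integers n and m, r n = r m if and only if n = m or n = -m. -/

import Mathlib

open LaurentPolynomial

theorem T_add_T_neg_eq_T_add_T_neg_iff {R : Type*} [Semiring R] [Nontrivial R] {n m : ℤ} :
    (T n + T (-n) : R[T;T⁻¹]) = T m + T (-m) ↔ n = m ∨ n = -m := by
  refine ⟨fun h ↦ ?_, ?_⟩
  · by_contra! ⟨hnm, hnm'⟩
    have coeff_eq (k : ℤ) := congrArg (fun p : R[T;T⁻¹] ↦ p.coeff k) h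
    simp only [AddMonoidAlgebra.coeff_add, Finsupp.add_apply, T_apply] at coeff_eq
    -- Compare coefficients at a nonzero exponent: `T 0 + T 0 = 2` may vanish in `R`.
    rcases eq_or_ne n 0 with rfl | hn
    · simpa [hnm, show -m ≠ m by omega] using coeff_eq m
    · simpa [hnm.symm, show -n ≠ n by omega, show -m ≠ n by omega] using coeff_eq n
  · rintro (rfl | rfl)
    · rfl
    · rw [neg_neg, add_comm]

theorem T_one_sub_two_add_T_neg_one_ne_zero {R : Type*} [Ring R] [Nontrivial R] :
    (T 1 - 2 + T (-1) : R[T;T⁻¹]) ≠ 0 := fun h ↦ by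
  simpa using congrArg (fun p : R[T;T⁻¹] ↦ p.coeff 1) h

/-- The family of Alexander polynomials
`r n = (T - 2 + T⁻¹) * (T^n + T^(-n)) + (T^2 - 4T + 5 - 4T⁻¹ + T^(-2))`
in `ℤ[T, T⁻¹]` satisfies `r n = r m ↔ n = m ∨ n = -m`. -/
theorem stmt_3 (r : ℤ → LaurentPolynomial ℤ)
    (hr : ∀ n : ℤ, r n = (T 1 - 2 + T (-1)) * (T n + T (-n))
      + (T 2 - 4 * T 1 + 5 - 4 * T (-1) + T (-2))) :
    ∀ n m : ℤ, r n = r m ↔ (n = m ∨ n = -m) := by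
  intro n m
  rw [hr, hr, add_left_inj, mul_right_inj' T_one_sub_two_add_T_neg_one_ne_zero,
    T_add_T_neg_eq_T_add_T_neg_iff]
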